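/- arXiv:1309.2128 — 2 statements merged into one kernel-verified Lean document; each statement's English description precedes it below -/
import Mathlib

section
/- Let X be a set, ν an ordinal, and g : Ordinal → Ordinal. Suppose that for each pair of ordinals (μ, β') with μ < ν and β' < g(μ) we are given a sequence (x^{μ,β'}_i)_{i∈ℕ} of elements of X and two sequences (a^{μ,β'}_i)_{i∈ℕ} and (b^{μ,β'}_i)_{i∈ℕ} of finite subsets of X. Then (∃_cf μ < ν)(∃_cf β' < g(μ)) [the sequence (a^{μ,β'}_i ∪ b^{μ,β'}_i)_{i∈ℕ} subsumes (x^{μ,β'}_i)_{i∈ℕ}] holds if and only if (∃_cf μ < ν)(∃_cf β' < g(μ)) [(a^{μ,β'}_i)_{i∈ℕ} subsumes (x^{μ,β'}_i)_{i∈ℕ}] holds, or (∃_cf μ < ν)(∃_cf β' < g(μ)) [(b^{μ,β'}_i)_{i∈ℕ} subsumes (x^{μ,β'}_i)_{i∈ℕ}] holds. (This is the key equivalence in the paper's Lemma 5.7, establishing that each operation f_{α,β,i} of the algebra M_δ commutes with the join-semilattice structure.) -/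
/-!
Colour a pair `i < j` of an infinite witness set `M` for `a ∪ b` according to whether
`x i ∈ a j`. By the infinite Ramsey theorem some infinite `M' ⊆ M` is monochromatic, and it
witnesses that `a` or `b` subsumes `x`. Ramsey's theorem comes from a nonprincipal ultrafilter
`U ∋ M`: fix the colour such that for `U`-most `i`, `U`-most `j` get that colour, then choose
the subsequence greedily, each new term in the finitely many `U`-large sets fixed so far.
The cofinal quantifier `∃_cf` distributes over `∨`: if the `φ`-instances are bounded by
`β₀ < α`, the `φ ∨ ψ`-instances above `max β β₀` are `ψ`-instances.
-/

universe u

/-- A sequence `a` of finite subsets of `X` *subsumes* a sequence `x` of elements of `X`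
if there is an infinite `M ⊆ ℕ` such that for all `i, j ∈ M` with `i < j`, `x i ∈ a j`. -/
def Subsumes {X : Type u} (a : ℕ → Finset X) (x : ℕ → X) : Prop :=
  ∃ M : Set ℕ, M.Infinite ∧ ∀ i ∈ M, ∀ j ∈ M, i < j → x i ∈ a j

/-- A set `C` of ordinals is cofinal in the ordinal `α` if every `β < α` is below
some member of `C`. -/
def CofinalIn (C : Set Ordinal.{u}) (α : Ordinal.{u}) : Prop :=
  ∀ β < α, ∃ γ ∈ C, β ≤ γ

/-- `∃_cf β < α, φ β`: the set of `β < α` satisfying `φ` is cofinal in `α`. -/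
def ExCf (α : Ordinal.{u}) (φ : Ordinal.{u} → Prop) : Prop :=
  CofinalIn {β | β < α ∧ φ β} α

open Filter

section Ramsey

variable {α : Type*} [LinearOrder α] [LocallyFiniteOrderBot α]

theorem Ultrafilter.exists_infinite_subset_pairwise (U : Ultrafilter α) (hU : (U : Filter α) ≤ cofinite)
    {S : Set α} (hS : S ∈ U) {r : α → α → Prop} (hr : ∀ i ∈ S, {j | r i j} ∈ U) :
    ∃ T ⊆ S, T.Infinite ∧ ∀ i ∈ T, ∀ j ∈ T, i < j → r i j := by
  classical
  obtain ⟨f, hfS, hf⟩ := exists_seq_of_forall_finset_exists (· ∈ S) (fun i j => i < j ∧ r i j)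
    fun s hs => by
      have hIoi : ∀ i, Set.Ioi i ∈ U := fun i =>
        hU <| mem_cofinite.2 <| by simpa only [Set.compl_Ioi] using Set.finite_Iic i
      have hnext : S ∩ ⋂ i ∈ s, Set.Ioi i ∩ {j | r i j} ∈ U :=
        inter_mem hS <| (biInter_finset_mem s).2 fun i hi => inter_mem (hIoi i) (hr i (hs i hi))
      obtain ⟨y, hyS, hy⟩ := Ultrafilter.nonempty_of_mem hnext
      exact ⟨y, hyS, fun i hi => Set.mem_iInter₂.1 hy i hi⟩
  have hmono : StrictMono f := strictMono_nat_of_lt_succ fun n => (hf n (n + 1) n.lt_succ_self).1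
  refine ⟨Set.range f, Set.range_subset_iff.2 hfS, Set.infinite_range_of_injective hmono.injective,
    ?_⟩
  rintro _ ⟨m, rfl⟩ _ ⟨n, rfl⟩ hmn
  exact (hf m n (hmono.lt_iff_lt.1 hmn)).2

/-- The infinite Ramsey theorem for pairs and two colours. -/
theorem Set.Infinite.exists_infinite_subset_pairwise_or {M : Set α} (hM : M.Infinite)
    (r : α → α → Prop) :
    ∃ T ⊆ M, T.Infinite ∧
      ((∀ i ∈ T, ∀ j ∈ T, i < j → r i j) ∨ ∀ i ∈ T, ∀ j ∈ T, i < j → ¬r i j) := by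
  have := hM.cofinite_inf_principal_neBot
  obtain ⟨U, hU⟩ := exists_ultrafilter_le (cofinite ⊓ 𝓟 M)
  have hcof : (U : Filter α) ≤ cofinite := hU.trans inf_le_left
  have hMU : M ∈ U := hU (mem_inf_of_right (mem_principal_self M))
  by_cases hmaj : {i | {j | r i j} ∈ U} ∈ U
  · obtain ⟨T, hT, hTinf, hr⟩ :=
      U.exists_infinite_subset_pairwise hcof (inter_mem hMU hmaj) fun i hi => hi.2
    exact ⟨T, hT.trans Set.inter_subset_left, hTinf, Or.inl hr⟩
  · have hmin : {i | {j | r i j} ∈ U}ᶜ ∈ U := Ultrafilter.compl_mem_iff_notMem.2 hmaj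
    obtain ⟨T, hT, hTinf, hr⟩ :=
      U.exists_infinite_subset_pairwise hcof (inter_mem hMU hmin) (r := fun i j => ¬r i j)
        fun i hi => Ultrafilter.compl_mem_iff_notMem.2 hi.2
    exact ⟨T, hT.trans Set.inter_subset_left, hTinf, Or.inr hr⟩

end Ramsey

theorem subsumes_union_iff {X : Type*} [DecidableEq X] (a b : ℕ → Finset X) (x : ℕ → X) :
    Subsumes (fun i => a i ∪ b i) x ↔ Subsumes a x ∨ Subsumes b x := by
  constructor
  · rintro ⟨M, hM, hab⟩
    obtain ⟨T, hTM, hT, ha | hna⟩ := hM.exists_infinite_subset_pairwise_or fun i j => x i ∈ a j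
    · exact Or.inl ⟨T, hT, ha⟩
    · exact Or.inr ⟨T, hT, fun i hi j hj hij =>
        (Finset.mem_union.1 (hab i (hTM hi) j (hTM hj) hij)).resolve_left (hna i hi j hj hij)⟩
  · rintro (⟨M, hM, ha⟩ | ⟨M, hM, hb⟩)
    · exact ⟨M, hM, fun i hi j hj hij => Finset.mem_union_left _ (ha i hi j hj hij)⟩
    · exact ⟨M, hM, fun i hi j hj hij => Finset.mem_union_right _ (hb i hi j hj hij)⟩

theorem exCf_or {α : Ordinal.{u}} {φ ψ : Ordinal.{u} → Prop} :
    ExCf α (fun β => φ β ∨ ψ β) ↔ ExCf α φ ∨ ExCf α ψ := by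
  constructor
  · intro H
    refine or_iff_not_imp_left.2 fun hφ β hβ => ?_
    obtain ⟨β₀, hβ₀, hbound⟩ : ∃ β₀ < α, ∀ γ < α, φ γ → γ < β₀ := by
      simpa [ExCf, CofinalIn] using hφ
    obtain ⟨γ, ⟨hγα, hγ | hγ⟩, hle⟩ := H (max β β₀) (max_lt hβ hβ₀)
    · exact absurd ((le_max_right _ _).trans hle) (hbound γ hγα hγ).not_ge
    · exact ⟨γ, ⟨hγα, hγ⟩, (le_max_left _ _).trans hle⟩
  · rintro (H | H) β hβ <;> obtain ⟨γ, ⟨hγα, hγ⟩, hle⟩ := H β hβ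
    · exact ⟨γ, ⟨hγα, Or.inl hγ⟩, hle⟩
    · exact ⟨γ, ⟨hγα, Or.inr hγ⟩, hle⟩

open scoped Classical in
/-- Key equivalence in Lemma 5.7: the doubly-cofinal subsumption condition for the
pointwise unions `a ∪ b` holds iff it holds for `a` or for `b`. -/
theorem exCf_exCf_subsumes_union_iff {X : Type u} (ν : Ordinal.{u})
    (g : Ordinal.{u} → Ordinal.{u})
    (x : Ordinal.{u} → Ordinal.{u} → ℕ → X)
    (a b : Ordinal.{u} → Ordinal.{u} → ℕ → Finset X) :
    (ExCf ν fun μ => ExCf (g μ) fun β' =>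
        Subsumes (fun i => a μ β' i ∪ b μ β' i) (x μ β')) ↔
      (ExCf ν fun μ => ExCf (g μ) fun β' => Subsumes (a μ β') (x μ β')) ∨
        (ExCf ν fun μ => ExCf (g μ) fun β' => Subsumes (b μ β') (x μ β')) := by
  simp only [subsumes_union_iff, exCf_or]
end

section
/- Let κ be a regular uncountable cardinal, T a monad on the category Type u of sets, and (A, α, β) a (P*κ, T)-tensor algebra generated by a subset X̂ ⊆ A. Define X_0 = X̂, X_{n+1} = P``(T``X_n) for n ∈ ℕ, and X_ω = ⋃_{n∈ℕ} X_n. Then every x ∈ P``X_ω can be written as a countable join x = β({x_n | n ∈ ℕ, n ≥ 1}) for some choice of elements x_n with x_n ∈ X_n for each n ≥ 1. -/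
open CategoryTheory

universe u

/-- Underlying object map of the non-empty `κ`-bounded powerset monad. -/
def PstarObj (κ : Cardinal.{u}) (X : Type u) : Type u :=
  {s : Set X // s.Nonempty ∧ Cardinal.mk s < κ}

namespace PstarObj

variable {κ : Cardinal.{u}}

/-- Direct image. -/
def fmap {X Y : Type u} (f : X → Y) (s : PstarObj κ X) : PstarObj κ Y :=
  ⟨f '' s.1, s.2.1.image f, Cardinal.mk_image_le.trans_lt s.2.2⟩

@[simp] theorem fmap_coe {X Y : Type u} (f : X → Y) (s : PstarObj κ X) :
    (fmap f s).1 = f '' s.1 := rfl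

/-- Unit: singletons. -/
def eta (hκ : κ.IsRegular) {X : Type u} (x : X) : PstarObj κ X :=
  ⟨{x}, Set.singleton_nonempty x, by
    rw [Cardinal.mk_singleton]
    exact lt_of_lt_of_le Cardinal.one_lt_aleph0 hκ.aleph0_le⟩

@[simp] theorem eta_coe (hκ : κ.IsRegular) {X : Type u} (x : X) :
    (eta hκ x : PstarObj κ X).1 = {x} := rfl

/-- Multiplication: union. -/
def mu (hκ : κ.IsRegular) {X : Type u} (S : PstarObj κ (PstarObj κ X)) : PstarObj κ X :=
  ⟨⋃ t ∈ S.1, t.1,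
    (S.2.1).elim fun t ht => (t.2.1).elim fun x hx => ⟨x, Set.mem_biUnion ht hx⟩,
    (Cardinal.card_biUnion_lt_iff_forall_of_isRegular hκ S.2.2).mpr fun t _ => t.2.2⟩

@[simp] theorem mu_coe (hκ : κ.IsRegular) {X : Type u} (S : PstarObj κ (PstarObj κ X)) :
    (mu hκ S).1 = ⋃ t ∈ S.1, t.1 := rfl

end PstarObj

/-- The non-empty `κ`-bounded powerset monad `P*κ`: it sends a set `X` to the set of
non-empty subsets of `X` of cardinality `< κ`, acts by direct image, has unit
`x ↦ {x}` and multiplication given by union. -/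
def Pstar (κ : Cardinal.{u}) (hκ : κ.IsRegular) : Monad (Type u) where
  obj X := PstarObj κ X
  map f := TypeCat.ofHom (PstarObj.fmap f)
  map_id X := by
    ext s
    apply Subtype.ext
    simp [PstarObj.fmap]
  map_comp {X Y Z} f g := by
    ext s
    apply Subtype.ext
    show ((f ≫ g) '' s.1 : Set Z) = g '' (f '' s.1)
    simp [Set.image_image]
  η :=
    { app := fun X => TypeCat.ofHom fun x => PstarObj.eta hκ x
      naturality := fun X Y f => by
        ext x
        apply Subtype.ext
        show ({f x} : Set Y) = f '' {x}
        simp }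
  μ :=
    { app := fun X => TypeCat.ofHom fun S => PstarObj.mu hκ S
      naturality := fun X Y f => by
        ext S
        apply Subtype.ext
        show (⋃ t ∈ (PstarObj.fmap (PstarObj.fmap f) S).1, t.1 : Set Y)
          = f '' (⋃ t ∈ S.1, t.1)
        ext y
        simp only [PstarObj.fmap_coe, Set.mem_iUnion, Set.mem_image]
        constructor
        · rintro ⟨t, ⟨⟨u, hu, rfl⟩, hy⟩⟩
          simp only [PstarObj.fmap_coe, Set.mem_image] at hy
          obtain ⟨x, hx, rfl⟩ := hy
          exact ⟨x, ⟨u, hu, hx⟩, rfl⟩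
        · rintro ⟨x, ⟨⟨u, hu, hx⟩, rfl⟩⟩
          exact ⟨PstarObj.fmap f u, ⟨⟨u, hu, rfl⟩, by
            simp only [PstarObj.fmap_coe]
            exact ⟨x, hx, rfl⟩⟩⟩ }
  left_unit X := by
    ext S
    apply Subtype.ext
    show (⋃ t ∈ (PstarObj.eta hκ S).1, t.1 : Set X) = S.1
    simp
  right_unit X := by
    ext S
    apply Subtype.ext
    show (⋃ t ∈ (PstarObj.fmap (PstarObj.eta hκ) S).1, t.1 : Set X) = S.1
    ext y
    simp
  assoc X := by
    ext SS
    apply Subtype.ext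
    show (⋃ t ∈ (PstarObj.fmap (PstarObj.mu hκ) SS).1, t.1 : Set X)
      = ⋃ t ∈ (PstarObj.mu hκ SS).1, t.1
    ext y
    simp only [PstarObj.fmap_coe, PstarObj.mu_coe, Set.mem_iUnion, Set.mem_image]
    constructor
    · rintro ⟨t, ⟨⟨U, hU, rfl⟩, hy⟩⟩
      simp only [PstarObj.mu_coe, Set.mem_iUnion] at hy
      obtain ⟨u, hu, hy⟩ := hy
      exact ⟨u, ⟨⟨U, hU, hu⟩, hy⟩⟩
    · rintro ⟨u, ⟨⟨U, hU, hu⟩, hy⟩⟩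
      exact ⟨PstarObj.mu hκ U, ⟨⟨U, hU, rfl⟩, by
        simp only [PstarObj.mu_coe, Set.mem_iUnion]
        exact ⟨u, hu, hy⟩⟩⟩

/-- A `(T,S)`-tensor algebra: a set with Eilenberg–Moore algebra structures for both
monads, satisfying the tensor law. -/
structure TensorAlg (T S : Monad (Type u)) where
  carrier : Type u
  α : T.obj carrier → carrier
  β : S.obj carrier → carrier
  α_unit : ∀ x : carrier, α (T.η.app carrier x) = x
  α_mul : ∀ m : T.obj (T.obj carrier), α (T.μ.app carrier m) = α (T.map (TypeCat.ofHom α) m)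
  β_unit : ∀ x : carrier, β (S.η.app carrier x) = x
  β_mul : ∀ m : S.obj (S.obj carrier), β (S.μ.app carrier m) = β (S.map (TypeCat.ofHom β) m)
  tensor_law : ∀ {Y Z : Type u} (p : T.obj Y) (q : S.obj Z) (f : Y × Z → carrier),
    α (T.map (TypeCat.ofHom fun y => β (S.map (TypeCat.ofHom fun z => f (y, z)) q)) p) =
      β (S.map (TypeCat.ofHom fun z => α (T.map (TypeCat.ofHom fun y => f (y, z)) p)) q)


/-- A subset of the carrier of a tensor algebra is closed if it is closed under both
algebra structures. -/
def TensorAlg.Closed {T S : Monad (Type u)} (A : TensorAlg T S) (s : Set A.carrier) : Prop :=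
  (∀ m : T.obj s, A.α (T.map (TypeCat.ofHom (Subtype.val : s → A.carrier)) m) ∈ s) ∧
    (∀ m : S.obj s, A.β (S.map (TypeCat.ofHom (Subtype.val : s → A.carrier)) m) ∈ s)

/-- A tensor algebra is generated by `X` if the only closed subset containing `X` is
the whole carrier. -/
def TensorAlg.GeneratedBy {T S : Monad (Type u)} (A : TensorAlg T S)
    (X : Set A.carrier) : Prop :=
  ∀ s : Set A.carrier, A.Closed s → X ⊆ s → s = Set.univ

/-- `T``Y`: the least subset of the carrier containing `Y` and closed under the
`T`-algebra structure `α`. -/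
def TensorAlg.TClosure {T S : Monad (Type u)} (A : TensorAlg T S)
    (Y : Set A.carrier) : Set A.carrier :=
  ⋂₀ {s : Set A.carrier |
    Y ⊆ s ∧ ∀ m : T.obj s, A.α (T.map (TypeCat.ofHom (Subtype.val : s → A.carrier)) m) ∈ s}

/-- The unordered pair `{x, y}` as an element of `P*κ`. -/
def pairEl {κ : Cardinal.{u}} (hκ : κ.IsRegular) {A : Type u} (x y : A) : PstarObj κ A :=
  ⟨{x, y}, ⟨x, Set.mem_insert x {y}⟩, by
    have hfin : Finite (↥({x, y} : Set A)) :=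
      ((Set.finite_singleton y).insert x).to_subtype
    exact lt_of_lt_of_le (Cardinal.lt_aleph0_of_finite _) hκ.aleph0_le⟩

/-- The semilattice order induced by the `P*κ`-algebra structure `β` of a
`(T, P*κ)`-tensor algebra: `x ≤ y` iff `x ∨ y = y`, where `x ∨ y = β {x, y}`. -/
def TensorAlg.le {κ : Cardinal.{u}} {hκ : κ.IsRegular} {T : Monad (Type u)}
    (A : TensorAlg T (Pstar κ hκ)) (x y : A.carrier) : Prop :=
  A.β (pairEl hκ x y) = y

/-- `P``Y = {β s | s ⊆ Y nonempty of cardinality < κ}`. -/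
def TensorAlg.PImage {κ : Cardinal.{u}} {hκ : κ.IsRegular} {T : Monad (Type u)}
    (A : TensorAlg T (Pstar κ hκ)) (Y : Set A.carrier) : Set A.carrier :=
  {a | ∃ s : PstarObj κ A.carrier, s.1 ⊆ Y ∧ A.β s = a}

/-!
The generation hypothesis yields some `c ∈ T``X̂` below `x`: the elements lying above a point
of `T``X̂` form a closed subset, since `α` is monotone for the join order (a consequence of the
tensor law) and joins only go up. As the `X_n` increase, `c ∈ T``X_n` for every `n`. Writing
`x = β s` with `s ⊆ X_ω`, the pieces `x_{n+1} = β ((s ∩ X_n) ∪ {c})` lie in `X_{n+1}`, and by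
associativity of `β` their join is `β (s ∪ {c}) = c ∨ x = x`.
-/

open Cardinal

theorem Set.image_sub_one_setOf_one_le {α : Type*} (f : ℕ → α) :
    (fun n => f (n - 1)) '' {n | 1 ≤ n} = Set.range f := by
  ext a
  constructor
  · rintro ⟨n, -, rfl⟩
    exact ⟨n - 1, rfl⟩
  · rintro ⟨m, rfl⟩
    exact ⟨m + 1, Nat.le_add_left 1 m, rfl⟩

namespace PstarObj

variable {κ : Cardinal.{u}} {X : Type u}

def insert (hκ : κ.IsRegular) (a : X) (t : Set X) (ht : #t < κ) : PstarObj κ X :=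
  ⟨Insert.insert a t, Set.insert_nonempty a t,
    mk_insert_le.trans_lt (add_lt_of_lt hκ.aleph0_le ht (one_lt_aleph0.trans_le hκ.aleph0_le))⟩

def ofRange (hunc : ℵ₀ < κ) (f : ℕ → X) : PstarObj κ X :=
  ⟨Set.range f, Set.range_nonempty f,
    (le_aleph0_iff_set_countable.mpr (Set.countable_range f)).trans_lt hunc⟩

end PstarObj

namespace TensorAlg

variable {κ : Cardinal.{u}} {hκ : κ.IsRegular} {T : Monad (Type u)}
  (A : TensorAlg T (Pstar κ hκ))

theorem beta_congr {U V : PstarObj κ A.carrier} (h : U.1 = V.1) : A.β U = A.β V :=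
  congrArg A.β (Subtype.ext h)

theorem beta_eq_of_biUnion (Q : PstarObj κ (PstarObj κ A.carrier))
    {U V : PstarObj κ A.carrier} (hU : U.1 = ⋃ t ∈ Q.1, t.1) (hV : V.1 = A.β '' Q.1) :
    A.β V = A.β U :=
  (A.beta_congr hV).trans ((A.β_mul Q).symm.trans (A.beta_congr hU.symm))

theorem beta_pair_eq_beta_insert (a : A.carrier) (U : PstarObj κ A.carrier) :
    A.β (pairEl hκ a (A.β U)) = A.β (PstarObj.insert hκ a U.1 U.2.2) := by
  refine A.beta_eq_of_biUnion (pairEl hκ (PstarObj.eta hκ a) U) ?_ ?_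
  · show Insert.insert a U.1 = ⋃ t ∈ ({PstarObj.eta hκ a, U} : Set (PstarObj κ A.carrier)), t.1
    rw [Set.biUnion_pair]
    rfl
  · exact (congrArg (fun b => ({b, A.β U} : Set A.carrier)) (A.β_unit a).symm).trans
      (Set.image_pair _ _ _).symm

theorem le_refl (a : A.carrier) : A.le a a :=
  (A.beta_congr (Set.pair_eq_singleton a)).trans (A.β_unit a)

theorem le_beta_of_mem {U : PstarObj κ A.carrier} {a : A.carrier} (ha : a ∈ U.1) :
    A.le a (A.β U) :=
  (A.beta_pair_eq_beta_insert a U).trans (A.beta_congr (Set.insert_eq_of_mem ha))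

theorem le_trans {a b c : A.carrier} (hab : A.le a b) (hbc : A.le b c) : A.le a c := by
  have habc := A.beta_pair_eq_beta_insert a (pairEl hκ b c)
  have hcab := A.beta_pair_eq_beta_insert c (pairEl hκ a b)
  rw [hbc] at habc
  rw [hab] at hcab
  show A.β (pairEl hκ a c) = c
  calc A.β (pairEl hκ a c) = A.β (PstarObj.insert hκ c {a, b} _) :=
        habc.trans (A.beta_congr (by
          ext; simp only [PstarObj.insert, pairEl, Set.mem_insert_iff, Set.mem_singleton_iff]; tauto))
    _ = A.β (pairEl hκ b c) := hcab.symm.trans (A.beta_congr (Set.pair_comm c b))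
    _ = c := hbc

theorem alpha_mono {Y : Type u} (p : T.obj Y) {f g : Y → A.carrier}
    (h : ∀ y, A.le (f y) (g y)) :
    A.le (A.α (T.map (TypeCat.ofHom f) p)) (A.α (T.map (TypeCat.ofHom g) p)) := by
  have key := A.tensor_law p (pairEl hκ f g) fun yh => yh.2 yh.1
  have hjoin : (fun y => A.β ((Pstar κ hκ).map (TypeCat.ofHom fun h : Y → A.carrier => h y)
      (pairEl hκ f g))) = g :=
    funext fun y => (A.beta_congr (Set.image_pair _ _ _)).trans (h y)
  rw [hjoin] at key
  exact (A.beta_congr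
    (Set.image_pair (fun k : Y → A.carrier => A.α (T.map (TypeCat.ofHom k) p)) f g).symm).trans
    key.symm

theorem subset_TClosure (Y : Set A.carrier) : Y ⊆ A.TClosure Y :=
  fun _ ha _ hs => hs.1 ha

theorem alpha_mem_TClosure (Y : Set A.carrier) (m : T.obj (A.TClosure Y)) :
    A.α (T.map (TypeCat.ofHom (Subtype.val : A.TClosure Y → A.carrier)) m) ∈ A.TClosure Y := by
  rintro s ⟨hYs, hs⟩
  have h := hs (T.map (TypeCat.ofHom fun a : A.TClosure Y => (⟨a.1, a.2 s ⟨hYs, hs⟩⟩ : s)) m)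
  rwa [← T.map_comp_apply] at h

theorem TClosure_mono {Y Y' : Set A.carrier} (h : Y ⊆ Y') : A.TClosure Y ⊆ A.TClosure Y' :=
  fun _ ha => ha _ ⟨h.trans (A.subset_TClosure Y'), A.alpha_mem_TClosure Y'⟩

theorem subset_PImage (Y : Set A.carrier) : Y ⊆ A.PImage Y :=
  fun a ha => ⟨PstarObj.eta hκ a, Set.singleton_subset_iff.mpr ha, A.β_unit a⟩

theorem closed_setOf_exists_TClosure_le (X : Set A.carrier) :
    A.Closed {b | ∃ c ∈ A.TClosure X, A.le c b} := by
  constructor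
  · intro m
    choose w hwX hw using fun b : {b | ∃ c ∈ A.TClosure X, A.le c b} => b.2
    refine ⟨_, A.alpha_mem_TClosure X (T.map (TypeCat.ofHom fun b => ⟨w b, hwX b⟩) m), ?_⟩
    rw [← T.map_comp_apply]
    exact A.alpha_mono m hw
  · rintro ⟨s, ⟨b, hb⟩, -⟩
    obtain ⟨c, hcX, hcb⟩ := b.2
    exact ⟨c, hcX, A.le_trans hcb (A.le_beta_of_mem ⟨b, hb, rfl⟩)⟩

theorem exists_TClosure_le_of_generatedBy {X : Set A.carrier} (hX : A.GeneratedBy X)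
    (b : A.carrier) : ∃ c ∈ A.TClosure X, A.le c b :=
  (hX _ (A.closed_setOf_exists_TClosure_le X) fun a ha =>
    ⟨a, A.subset_TClosure X ha, A.le_refl a⟩).symm.subset (Set.mem_univ b)

theorem exists_beta_ofRange_eq (hunc : ℵ₀ < κ) {Y : ℕ → Set A.carrier}
    (s : PstarObj κ A.carrier) (hs : s.1 ⊆ ⋃ n, Y n) {c : A.carrier}
    (hcY : ∀ n, c ∈ A.TClosure (Y n)) (hcs : A.le c (A.β s)) :
    ∃ xs : ℕ → A.carrier, (∀ n, xs n ∈ A.PImage (A.TClosure (Y n))) ∧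
      A.β (PstarObj.ofRange hunc xs) = A.β s := by
  let U n : PstarObj κ A.carrier :=
    PstarObj.insert hκ c (s.1 ∩ Y n) ((mk_le_mk_of_subset Set.inter_subset_left).trans_lt s.2.2)
  refine ⟨fun n => A.β (U n), fun n => ⟨U n, ?_, rfl⟩, ?_⟩
  · exact Set.insert_subset (hcY n) (Set.inter_subset_right.trans (A.subset_TClosure _))
  have hU : (PstarObj.insert hκ c s.1 s.2.2).1 = ⋃ t ∈ (PstarObj.ofRange hunc U).1, t.1 := by
    show Insert.insert c s.1 = ⋃ t ∈ Set.range U, t.1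
    rw [Set.biUnion_range]
    show _ = ⋃ n, Insert.insert c (s.1 ∩ Y n)
    rw [← Set.insert_iUnion, ← Set.inter_iUnion, Set.inter_eq_left.mpr hs]
  calc A.β (PstarObj.ofRange hunc fun n => A.β (U n))
      = A.β (PstarObj.insert hκ c s.1 s.2.2) :=
        A.beta_eq_of_biUnion (PstarObj.ofRange hunc U) hU (Set.range_comp _ _)
    _ = A.β (pairEl hκ c (A.β s)) := (A.beta_pair_eq_beta_insert c s).symm
    _ = A.β s := hcs

end TensorAlg

/-- Lemma 4.2: with `X₀ = X̂`, `X_{n+1} = P``(T``X_n)` and `X_ω = ⋃ₙ X_n`, every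
element of `P``X_ω` is a countable join `⋁_{n ≥ 1} x_n` with `x_n ∈ X_n`. -/
theorem mem_PImage_eq_countable_join {κ : Cardinal.{u}} (hκ : κ.IsRegular)
    (hunc : Cardinal.aleph0 < κ) (T : Monad (Type u))
    (A : TensorAlg T (Pstar κ hκ)) (Xhat : Set A.carrier) (hgen : A.GeneratedBy Xhat)
    (Xseq : ℕ → Set A.carrier) (h0 : Xseq 0 = Xhat)
    (hsucc : ∀ n : ℕ, Xseq (n + 1) = A.PImage (A.TClosure (Xseq n)))
    (x : A.carrier) (hx : x ∈ A.PImage (⋃ n : ℕ, Xseq n)) :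
    ∃ xs : ℕ → A.carrier, (∀ n : ℕ, 1 ≤ n → xs n ∈ Xseq n) ∧
      x = A.β ⟨xs '' {n : ℕ | 1 ≤ n},
        ⟨xs 1, Set.mem_image_of_mem xs (by norm_num)⟩,
        by
          have hc : (xs '' {n : ℕ | 1 ≤ n}).Countable :=
            (Set.to_countable _).image xs
          have := hc.to_subtype
          exact lt_of_le_of_lt Cardinal.mk_le_aleph0 hunc⟩ := by
  obtain ⟨s, hs, rfl⟩ := hx
  obtain ⟨c, hcX, hcs⟩ := A.exists_TClosure_le_of_generatedBy hgen (A.β s)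
  have hmono : Monotone Xseq := monotone_nat_of_le_succ fun n =>
    (hsucc n).symm ▸ (A.subset_TClosure _).trans (A.subset_PImage _)
  have hcY : ∀ n, c ∈ A.TClosure (Xseq n) :=
    fun n => A.TClosure_mono (h0 ▸ hmono n.zero_le) hcX
  obtain ⟨xs, hxs, hjoin⟩ := A.exists_beta_ofRange_eq hunc s hs hcY hcs
  refine ⟨fun n => xs (n - 1), fun n hn => ?_, ?_⟩
  · obtain ⟨m, rfl⟩ := Nat.exists_eq_add_of_le' hn
    simpa [hsucc] using hxs m
  · exact hjoin.symm.trans (A.beta_congr (Set.image_sub_one_setOf_one_le xs).symm)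
end
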